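/- arXiv:2209.15102 — 6 statements merged into one kernel-verified Lean document; each statement's English description precedes it below -/
import Mathlib

section
/- Gordan's Lemma: Let L ⊂ R^d be a full-rank lattice (a free Z-submodule of rank d) and let C ⊂ R^d be a polyhedral cone generated by finitely many lattice vectors u₁,...,u_k ∈ L. Then the semigroup S = (L ∩ C) \ {0} under addition is finitely generated; specifically, the finite set (L ∩ H) where H = {Σ a_i u_i : a_i ∈ [0,1]} generates S. -/
/-!
Write `x = ∑ bᵢ uᵢ` with `bᵢ ≥ 0` and split each coefficient into its integer part and its
fractional part: `x = y + ∑ ⌊bᵢ⌋ uᵢ` with `y ∈ H`. As the `uᵢ` lie in `L` and in `H`, so does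
`y = x - ∑ ⌊bᵢ⌋ uᵢ ∈ L`, hence `x` is a sum of elements of `L ∩ H`. Finiteness of `L ∩ H` holds
because `H` is compact and a discrete subgroup of `ℝ^d` is closed.
-/

open Set

theorem AddSubmonoid.exists_fin_sum_of_mem_closure {M : Type*} [AddCommMonoid M] {s : Set M}
    {x : M} (hx : x ∈ closure s) : ∃ n : ℕ, ∃ f : Fin n → M, (∀ j, f j ∈ s) ∧ x = ∑ j, f j := by
  obtain ⟨l, hl, rfl⟩ := exists_list_of_mem_closure hx
  exact ⟨l.length, l.get, fun j => hl _ (l.get_mem j), by rw [← List.sum_ofFn, List.ofFn_get]⟩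

theorem AddSubgroup.finite_inter_of_isBounded {E : Type*} [NormedAddCommGroup E] [ProperSpace E]
    (L : AddSubgroup E) [DiscreteTopology L] {s : Set E} (hs : Bornology.IsBounded s) :
    ((L : Set E) ∩ s).Finite :=
  inter_comm s L ▸ Metric.finite_isBounded_inter_isClosed DiscreteTopology.isDiscrete hs
    L.isClosed_of_discrete

section Parallelotope

variable {ι M : Type*} [Fintype ι] [AddCommGroup M] [Module ℝ M]

def parallelotope (u : ι → M) : Set M :=
  {x | ∃ a : ι → ℝ, (∀ i, a i ∈ Icc (0 : ℝ) 1) ∧ x = ∑ i, a i • u i}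

theorem parallelotope_eq_image (u : ι → M) :
    parallelotope u = (fun a : ι → ℝ => ∑ i, a i • u i) '' Icc 0 1 := by
  ext x
  simp only [parallelotope, mem_Icc, Pi.le_def, Pi.zero_apply, Pi.one_apply, forall_and,
    mem_ofPred_eq, mem_image, eq_comm (a := x)]

theorem isCompact_parallelotope [TopologicalSpace M] [ContinuousAdd M] [ContinuousSMul ℝ M]
    (u : ι → M) : IsCompact (parallelotope u) :=
  parallelotope_eq_image u ▸ isCompact_Icc.image
    (continuous_finsetSum _ fun i _ => (continuous_apply i).smul continuous_const)

theorem mem_parallelotope_self (u : ι → M) (i : ι) : u i ∈ parallelotope u := by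
  classical
  exact ⟨Pi.single i 1, fun j => by by_cases h : j = i <;> simp [h], by simp [Pi.single_apply]⟩

theorem sum_smul_mem_closure_inter_parallelotope {L : AddSubgroup M} {u : ι → M}
    (hu : ∀ i, u i ∈ L) {b : ι → ℝ} (hb : ∀ i, 0 ≤ b i) (hx : ∑ i, b i • u i ∈ L) :
    ∑ i, b i • u i ∈ AddSubmonoid.closure ((L : Set M) ∩ parallelotope u) := by
  set y := ∑ i, (b i - ⌊b i⌋₊) • u i
  have hsplit : ∑ i, b i • u i = y + ∑ i, ⌊b i⌋₊ • u i := by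
    rw [← Finset.sum_add_distrib]
    refine Finset.sum_congr rfl fun i _ => ?_
    rw [← Nat.cast_smul_eq_nsmul ℝ, ← add_smul, sub_add_cancel]
  have hyH : y ∈ parallelotope u :=
    ⟨_, fun i => ⟨sub_nonneg.2 (Nat.floor_le (hb i)),
      sub_le_iff_le_add'.2 (Nat.lt_floor_add_one (b i)).le⟩, rfl⟩
  have hyL : y ∈ L := by
    rw [eq_sub_of_add_eq hsplit.symm]
    exact sub_mem hx (sum_mem fun i _ => nsmul_mem (hu i) _)
  rw [hsplit]
  refine add_mem (AddSubmonoid.subset_closure ⟨hyL, hyH⟩) (sum_mem fun i _ => nsmul_mem ?_ _)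
  exact AddSubmonoid.subset_closure ⟨hu i, mem_parallelotope_self u i⟩

end Parallelotope

theorem gordan_general (d k : ℕ) (L : Submodule ℤ (Fin d → ℝ))
    (hdisc : DiscreteTopology L)
    (u : Fin k → (Fin d → ℝ)) (hu : ∀ i, u i ∈ L)
    (C H : Set (Fin d → ℝ))
    (hC : C = {x | ∃ b : Fin k → ℝ, (∀ i, 0 ≤ b i) ∧ x = ∑ i, b i • u i})
    (hH : H = {x | ∃ a : Fin k → ℝ, (∀ i, a i ∈ Set.Icc (0:ℝ) 1) ∧ x = ∑ i, a i • u i}) :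
    ({x | x ∈ L} ∩ H).Finite ∧
    ∀ x ∈ L, x ∈ C → x ≠ 0 →
      ∃ n : ℕ, ∃ f : Fin n → (Fin d → ℝ),
        (∀ j, f j ∈ L ∧ f j ∈ H ∧ f j ≠ 0) ∧ x = ∑ j, f j := by
  have : DiscreteTopology L.toAddSubgroup := hdisc
  obtain rfl : H = parallelotope u := hH
  subst hC
  refine ⟨L.toAddSubgroup.finite_inter_of_isBounded (isCompact_parallelotope u).isBounded, ?_⟩
  rintro _ hxL ⟨b, hb, rfl⟩ -
  have hx := sum_smul_mem_closure_inter_parallelotope (L := L.toAddSubgroup) hu hb hxL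
  rw [← AddSubmonoid.closure_sdiff_singleton_zero] at hx
  obtain ⟨n, f, hf, hsum⟩ := AddSubmonoid.exists_fin_sum_of_mem_closure hx
  exact ⟨n, f, fun j => ⟨(hf j).1.1, (hf j).1.2, (hf j).2⟩, hsum⟩

/-- Gordan's Lemma: for a discrete full-rank lattice `L ⊆ ℝ^d` and a polyhedral
cone `C` generated by lattice vectors `u₁,...,u_k`, the set `L ∩ H` (where `H`
is the set of `[0,1]`-combinations of the `uᵢ`) is finite, and every nonzero
element of `L ∩ C` is a finite sum of nonzero elements of `L ∩ H`; hence the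
semigroup `(L ∩ C) \ {0}` is finitely generated. -/
theorem gordan (d k : ℕ) (L : Submodule ℤ (Fin d → ℝ))
    (bL : Module.Basis (Fin d) ℤ L) (hdisc : DiscreteTopology L)
    (u : Fin k → (Fin d → ℝ)) (hu : ∀ i, u i ∈ L)
    (C H : Set (Fin d → ℝ))
    (hC : C = {x | ∃ b : Fin k → ℝ, (∀ i, 0 ≤ b i) ∧ x = ∑ i, b i • u i})
    (hH : H = {x | ∃ a : Fin k → ℝ, (∀ i, a i ∈ Set.Icc (0:ℝ) 1) ∧ x = ∑ i, a i • u i}) :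
    ({x | x ∈ L} ∩ H).Finite ∧
    ∀ x ∈ L, x ∈ C → x ≠ 0 →
      ∃ n : ℕ, ∃ f : Fin n → (Fin d → ℝ),
        (∀ j, f j ∈ L ∧ f j ∈ H ∧ f j ≠ 0) ∧ x = ∑ j, f j :=
  gordan_general d k L hdisc u hu C H hC hH
end

section
/- Let λ be a Perron number of degree d. Then there exists a rational polyhedral convex cone KR_λ in V_λ = Q(λ) ⊗ R generated by finitely many elements of the ring of integers O_λ, such that λ·K_λ ⊆ KR_λ ⊆ K_λ, where K_λ is the invariant eigencone of the multiplication-by-λ action. -/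
/-!
In eigencoordinates `a = (a₀, a₁, …)` the cone `K_λ` is `|aᵢ| < a₀` (`i ≠ 0`), and `λ` acts
diagonally, so `λ·K_λ` lies in the closed subcone `|aᵢ| ≤ r a₀` for some `r < 1`. For each sign
pattern `σ`, the open region of `K_λ` where `σᵢ aᵢ > r a₀` for all `i ≠ 0` contains a lattice
point, by density of the rays of `𝓞_λ`. The cone spanned by these `2^d` lattice points lies in
`K_λ ∪ {0}` by convexity, and contains `|aᵢ| ≤ r a₀`: otherwise a functional separating a point
of the slice `a₀ = 1` from the (compact) convex hull of the normalized generators would be beaten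
by the generator whose signs agree with the functional's coefficients.
-/

open Finset

def boolSign (b : Bool) : ℝ := if b then 1 else -1

def nonnegCombinations {κ E : Type*} [Fintype κ] [AddCommMonoid E] [Module ℝ E] (u : κ → E) :
    Set E :=
  {y | ∃ b : κ → ℝ, (∀ j, 0 ≤ b j) ∧ y = ∑ j, b j • u j}

section Nonneg

variable {κ ι E F : Type*} [Fintype κ] [Fintype ι] [AddCommGroup E] [Module ℝ E]
  [AddCommGroup F] [Module ℝ F]

theorem nonnegCombinations_comp_equiv (u : ι → E) (e : κ ≃ ι) :
    nonnegCombinations (u ∘ e) = nonnegCombinations u := by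
  ext y
  constructor
  · rintro ⟨b, hb, rfl⟩
    exact ⟨b ∘ e.symm, fun i => hb _, by rw [← e.sum_comp]; simp⟩
  · rintro ⟨b, hb, rfl⟩
    exact ⟨b ∘ e, fun j => hb _, (e.sum_comp fun i => b i • u i).symm⟩

theorem LinearMap.mem_nonnegCombinations_comp (f : E →ₗ[ℝ] F) {u : ι → E} {y : E}
    (hy : y ∈ nonnegCombinations u) : f y ∈ nonnegCombinations (f ∘ u) := by
  obtain ⟨b, hb, rfl⟩ := hy
  exact ⟨b, hb, by simp⟩

theorem LinearEquiv.mem_nonnegCombinations_comp_iff (e : E ≃ₗ[ℝ] F) {u : ι → E} {y : E} :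
    e y ∈ nonnegCombinations (e ∘ u) ↔ y ∈ nonnegCombinations u := by
  refine ⟨fun hy => ?_, e.toLinearMap.mem_nonnegCombinations_comp⟩
  simpa [Function.comp_def] using e.symm.toLinearMap.mem_nonnegCombinations_comp hy

theorem ConvexCone.nonnegCombinations_subset (K : ConvexCone ℝ E) {u : ι → E}
    (hu : ∀ i, u i ∈ K) : nonnegCombinations u ⊆ insert 0 (K : Set E) := by
  rintro _ ⟨b, hb, rfl⟩
  obtain hb0 | hpos := (sum_nonneg fun i _ => hb i).eq_or_lt
  · have : ∀ i, b i = 0 := fun i =>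
      (sum_eq_zero_iff_of_nonneg fun i _ => hb i).1 hb0.symm i (mem_univ i)
    simp [this]
  refine Or.inr ?_
  have hconv : ∑ i, ((∑ j, b j)⁻¹ * b i) • u i ∈ K :=
    K.convex.sum_mem (fun i _ => by have := hb i; positivity)
      (by rw [← mul_sum, inv_mul_cancel₀ hpos.ne']) fun i _ => hu i
  have hscale : ∑ i, b i • u i = (∑ j, b j) • ∑ i, ((∑ j, b j)⁻¹ * b i) • u i := by
    simp_rw [smul_sum, smul_smul, mul_inv_cancel_left₀ hpos.ne']
  rw [hscale]
  exact K.smul_mem hpos hconv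

end Nonneg

theorem exists_mem_of_dense_rays {E : Type*} [TopologicalSpace E] [SMul ℝ E] {S U : Set E}
    (hS : Dense {x | ∃ c : ℝ, 0 < c ∧ c • x ∈ S}) (hU : IsOpen U) (hne : U.Nonempty)
    (hsmul : ∀ c : ℝ, 0 < c → ∀ x ∈ U, c • x ∈ U) : ∃ x ∈ S, x ∈ U := by
  obtain ⟨x, ⟨c, hc, hcx⟩, hxU⟩ := hS.exists_mem_open hU hne
  exact ⟨c • x, hcx, hsmul c hc x hxU⟩

theorem Module.Basis.equivFun_apply_of_eigenvectors {ι R E : Type*} [Fintype ι] [CommRing R]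
    [AddCommGroup E] [Module R E] (b : Module.Basis ι R E) (f : E →ₗ[R] E) (μ : ι → R)
    (hf : ∀ i, f (b i) = μ i • b i) (x : E) : b.equivFun (f x) = μ * b.equivFun x := by
  have hfx : f x = b.equivFun.symm (μ * b.equivFun x) :=
    calc f x = f (∑ i, b.equivFun x i • b i) := by rw [b.sum_equivFun]
      _ = ∑ i, (μ i * b.equivFun x i) • b i := by
        simp only [map_sum, map_smul, hf, smul_smul, mul_comm]
      _ = b.equivFun.symm (μ * b.equivFun x) := (b.equivFun_symm_apply _).symm
  rw [hfx, LinearEquiv.apply_symm_apply]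

theorem isOpen_setOf_forall_ne {ι X : Type*} [Finite ι] [TopologicalSpace X]
    {P : ι → X → Prop} (i₀ : ι) (hP : ∀ i ≠ i₀, IsOpen {x | P i x}) :
    IsOpen {x | ∀ i ≠ i₀, P i x} := by
  simp only [Set.ofPred_forall]
  refine isOpen_iInter_of_finite fun i => ?_
  by_cases hi : i = i₀
  · simp [hi]
  · simpa [hi] using hP i hi

section Corners

variable {ι : Type*} [Fintype ι] [DecidableEq ι]

theorem exists_mem_stdSimplex_sum_smul_eq_of_corners {i₀ : ι} {r : ℝ}
    {t : (ι → Bool) → ι → ℝ} {p : ι → ℝ} (ht₀ : ∀ σ, t σ i₀ = p i₀)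
    (ht : ∀ σ, ∀ i ≠ i₀, r ≤ boolSign (σ i) * t σ i) (hp : ∀ i ≠ i₀, |p i| ≤ r) :
    ∃ w ∈ stdSimplex ℝ (ι → Bool), ∑ σ, w σ • t σ = p := by
  set S := Fintype.linearCombination ℝ t '' stdSimplex ℝ (ι → Bool)
  suffices p ∈ S by simpa [S, Fintype.linearCombination_apply] using this
  by_contra hpS
  have hS : IsCompact S :=
    (isCompact_stdSimplex ℝ _).image (LinearMap.continuous_of_finiteDimensional _)
  obtain ⟨f, c, hfS, hfp⟩ := geometric_hahn_banach_closed_point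
    ((convex_stdSimplex ℝ _).linear_image _) hS.isClosed hpS
  -- the corner whose signs are those of the coefficients of `f` beats `p` term by term
  let σ : ι → Bool := fun i => decide (0 ≤ f (Pi.single i 1))
  have htσ : t σ ∈ S := ⟨Pi.single σ 1, single_mem_stdSimplex _ σ, by simp⟩
  have hfle : f p ≤ f (t σ) := by
    have hexpand : ∀ x, f x = ∑ i, x i * f (Pi.single i 1) := fun x => by
      conv_lhs => rw [← univ_sum_single x]
      refine (map_sum f _ _).trans (sum_congr rfl fun i _ => ?_)
      rw [← smul_eq_mul, ← map_smul, ← Pi.single_smul', smul_eq_mul, mul_one]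
    rw [hexpand, hexpand]
    refine sum_le_sum fun i _ => ?_
    obtain rfl | hi := eq_or_ne i i₀
    · rw [ht₀]
    have hpi := abs_le.1 (hp i hi)
    by_cases hf : 0 ≤ f (Pi.single i 1)
    · have : r ≤ t σ i := by simpa [σ, boolSign, hf] using ht σ i hi
      exact mul_le_mul_of_nonneg_right (by linarith) hf
    · have : r ≤ -t σ i := by simpa [σ, boolSign, hf] using ht σ i hi
      exact mul_le_mul_of_nonpos_right (by linarith) (by linarith)
  linarith [hfS _ htσ]

theorem mem_nonnegCombinations_of_corners {i₀ : ι} {r : ℝ} {u : (ι → Bool) → ι → ℝ}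
    (hu₀ : ∀ σ, 0 < u σ i₀) (hu : ∀ σ, ∀ i ≠ i₀, r * u σ i₀ ≤ boolSign (σ i) * u σ i)
    {a : ι → ℝ} (ha₀ : 0 < a i₀) (ha : ∀ i ≠ i₀, |a i| ≤ r * a i₀) :
    a ∈ nonnegCombinations u := by
  obtain ⟨w, hw, hsum⟩ := exists_mem_stdSimplex_sum_smul_eq_of_corners (i₀ := i₀) (r := r)
    (t := fun σ => (u σ i₀)⁻¹ • u σ) (p := (a i₀)⁻¹ • a)
    (fun σ => by simp [(hu₀ σ).ne', ha₀.ne'])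
    (fun σ i hi => by
      simpa [mul_left_comm _ (u σ i₀)⁻¹, le_inv_mul_iff₀ (hu₀ σ), mul_comm _ r] using hu σ i hi)
    (fun i hi => by
      simpa [abs_mul, abs_of_pos ha₀, inv_mul_le_iff₀ ha₀, mul_comm r] using ha i hi)
  refine ⟨fun σ => a i₀ * w σ * (u σ i₀)⁻¹,
    fun σ => by have := hw.1 σ; have := hu₀ σ; positivity, ?_⟩
  calc a = a i₀ • (a i₀)⁻¹ • a := by rw [smul_smul, mul_inv_cancel₀ ha₀.ne', one_smul]
    _ = _ := by rw [← hsum, smul_sum]; simp_rw [smul_smul, mul_assoc]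

end Corners

section Eigencone

variable {ι : Type*}

theorem exists_abs_le_mul_of_abs_lt [Fintype ι] {μ : ι → ℝ} {i₀ : ι}
    (hμ : ∀ i ≠ i₀, |μ i| < μ i₀) (hμ₀ : 0 < μ i₀) :
    ∃ r, 0 ≤ r ∧ r < 1 ∧ ∀ i ≠ i₀, |μ i| ≤ r * μ i₀ := by
  classical
  let ratio : ι → ℝ := fun i => if i = i₀ then 0 else |μ i| / μ i₀
  refine ⟨univ.sup' ⟨i₀, mem_univ _⟩ ratio, ?_, ?_, fun i hi => ?_⟩
  · simpa [ratio] using le_sup' ratio (mem_univ i₀)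
  · refine (sup'_lt_iff _).2 fun i _ => ?_
    by_cases hi : i = i₀
    · simp [ratio, hi]
    · simpa [ratio, hi, div_lt_one hμ₀] using hμ i hi
  · rw [← div_le_iff₀ hμ₀]
    simpa [ratio, hi] using le_sup' ratio (mem_univ i)

def eigencone (i₀ : ι) : ConvexCone ℝ (ι → ℝ) where
  carrier := {a | 0 < a i₀ ∧ ∀ i ≠ i₀, |a i| < a i₀}
  smul_mem' c hc a ha := ⟨mul_pos hc ha.1, fun i hi => by
    simpa [abs_mul, abs_of_pos hc] using mul_lt_mul_of_pos_left (ha.2 i hi) hc⟩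
  add_mem' a ha b hb := ⟨add_pos ha.1 hb.1, fun i hi =>
    (abs_add_le _ _).trans_lt (add_lt_add (ha.2 i hi) (hb.2 i hi))⟩

theorem mem_eigencone {i₀ : ι} {a : ι → ℝ} :
    a ∈ eigencone i₀ ↔ 0 < a i₀ ∧ ∀ i ≠ i₀, |a i| < a i₀ :=
  Iff.rfl

theorem isOpen_eigencone [Finite ι] (i₀ : ι) : IsOpen (eigencone i₀ : Set (ι → ℝ)) :=
  (isOpen_lt continuous_const (continuous_apply i₀)).inter <| isOpen_setOf_forall_ne i₀
    fun i _ => isOpen_lt (continuous_apply i).abs (continuous_apply i₀)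

def cornerRegion (i₀ : ι) (r : ℝ) (σ : ι → Bool) : Set (ι → ℝ) :=
  {a | a ∈ eigencone i₀ ∧ ∀ i ≠ i₀, r * a i₀ < boolSign (σ i) * a i}

theorem isOpen_cornerRegion [Finite ι] (i₀ : ι) (r : ℝ) (σ : ι → Bool) :
    IsOpen (cornerRegion i₀ r σ) :=
  (isOpen_eigencone i₀).inter <| isOpen_setOf_forall_ne i₀ fun i _ =>
    isOpen_lt (continuous_const.mul (continuous_apply i₀))
      (continuous_const.mul (continuous_apply i))

theorem cornerRegion_nonempty [DecidableEq ι] (i₀ : ι) {r : ℝ} (hr₀ : 0 ≤ r) (hr₁ : r < 1)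
    (σ : ι → Bool) : (cornerRegion i₀ r σ).Nonempty := by
  refine ⟨fun i => if i = i₀ then 1 else boolSign (σ i) * ((1 + r) / 2),
    ⟨by simp, fun i hi => ?_⟩, fun i hi => ?_⟩
  all_goals
    cases hσ : σ i <;> simp [boolSign, hi, hσ, abs_of_pos (by linarith : 0 < (1 + r) / 2)] <;>
      linarith

theorem smul_mem_cornerRegion {i₀ : ι} {r : ℝ} {σ : ι → Bool} {c : ℝ} (hc : 0 < c) {a : ι → ℝ}
    (ha : a ∈ cornerRegion i₀ r σ) : c • a ∈ cornerRegion i₀ r σ :=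
  ⟨(eigencone i₀).smul_mem hc ha.1, fun i hi => by
    simpa [mul_left_comm _ c] using mul_lt_mul_of_pos_left (ha.2 i hi) hc⟩

theorem mul_mem_nonnegCombinations_of_mem_eigencone [Fintype ι] [DecidableEq ι] {i₀ : ι}
    {r : ℝ} {μ : ι → ℝ} (hμ₀ : 0 < μ i₀) (hμ : ∀ i ≠ i₀, |μ i| ≤ r * μ i₀)
    {u : (ι → Bool) → ι → ℝ} (hu : ∀ σ, u σ ∈ cornerRegion i₀ r σ) {a : ι → ℝ}
    (ha : a ∈ eigencone i₀) : μ * a ∈ nonnegCombinations u :=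
  mem_nonnegCombinations_of_corners (fun σ => (hu σ).1.1) (fun σ i hi => ((hu σ).2 i hi).le)
    (mul_pos hμ₀ ha.1) fun i hi =>
  calc |μ i * a i| = |μ i| * |a i| := abs_mul _ _
    _ ≤ r * μ i₀ * a i₀ :=
      mul_le_mul (hμ i hi) (ha.2 i hi).le (abs_nonneg _) ((abs_nonneg _).trans (hμ i hi))
    _ = r * (μ * a) i₀ := by rw [Pi.mul_apply, mul_assoc]

end Eigencone

/-- Existence of a rational polyhedral cone. With the multiplication-by-λ
action of a Perron number modeled by the companion matrix `C` on `ℝ^d` (with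
Perron eigenbasis `v`, eigenvalues `μ`), and `L` the lattice `𝓞_λ` whose set
of rays is dense (`P(𝓞_λ)` dense in `P(V_λ)`), there is a polyhedral cone `KR`
generated by finitely many lattice vectors with `λ·K_λ ⊆ KR ⊆ K_λ`. -/
theorem rational_cone (d : ℕ) [NeZero d] (C : Matrix (Fin d) (Fin d) ℝ)
    (μ : Fin d → ℝ) (v : Fin d → (Fin d → ℝ))
    (hbasis : LinearIndependent ℝ v)
    (hspan : Submodule.span ℝ (Set.range v) = ⊤)
    (heig : ∀ i, C.mulVec (v i) = μ i • v i)
    (hPerron : ∀ i, i ≠ 0 → μ 0 > |μ i|) (hpos : 0 < μ 0)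
    (L : Submodule ℤ (Fin d → ℝ))
    (hdense : Dense {x : Fin d → ℝ | ∃ c : ℝ, 0 < c ∧ c • x ∈ L})
    (Kcone : Set (Fin d → ℝ))
    (hK : Kcone = {x | ∃ a : Fin d → ℝ, x = ∑ i, a i • v i ∧ 0 < a 0 ∧
      ∀ i, i ≠ 0 → |a i| < a 0}) :
    ∃ k : ℕ, ∃ u : Fin k → (Fin d → ℝ), (∀ i, u i ∈ L) ∧
      (∀ x ∈ Kcone, C.mulVec x ∈
        {y | ∃ b : Fin k → ℝ, (∀ i, 0 ≤ b i) ∧ y = ∑ i, b i • u i}) ∧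
      (∀ y, (∃ b : Fin k → ℝ, (∀ i, 0 ≤ b i) ∧ y = ∑ i, b i • u i) →
        y ≠ 0 → y ∈ Kcone) := by
  obtain ⟨r, hr₀, hr₁, hμr⟩ := exists_abs_le_mul_of_abs_lt hPerron hpos
  let B := Module.Basis.mk hbasis hspan.ge
  have hKe : ∀ x, x ∈ Kcone ↔ B.equivFun x ∈ eigencone 0 := fun x => by
    have hv : ∀ a, ∑ i, a i • v i = B.equivFun.symm a := fun a => by
      simp [B, Module.Basis.equivFun_symm_apply]
    rw [hK, Set.mem_ofPred_eq]
    simp only [hv, LinearEquiv.eq_symm_apply, exists_eq_left', mem_eigencone]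
  have hCe : ∀ x, B.equivFun (C.mulVec x) = μ * B.equivFun x :=
    B.equivFun_apply_of_eigenvectors C.mulVecLin μ (by simpa [B] using heig)
  have hgen : ∀ σ, ∃ u ∈ L, B.equivFun u ∈ cornerRegion 0 r σ := fun σ =>
    exists_mem_of_dense_rays hdense
      ((isOpen_cornerRegion 0 r σ).preimage B.equivFun.toLinearMap.continuous_of_finiteDimensional)
      ((cornerRegion_nonempty 0 hr₀ hr₁ σ).preimage B.equivFun.surjective)
      fun c hc x hx => by
        change B.equivFun (c • x) ∈ cornerRegion 0 r σ
        rw [map_smul]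
        exact smul_mem_cornerRegion hc hx
  choose u huL hu using hgen
  refine ⟨_, u ∘ (Fintype.equivFin _).symm, fun j => huL _, fun x hx => ?_, fun y hy hy0 => ?_⟩
  · change C.mulVec x ∈ nonnegCombinations _
    rw [nonnegCombinations_comp_equiv, ← B.equivFun.mem_nonnegCombinations_comp_iff, hCe]
    exact mul_mem_nonnegCombinations_of_mem_eigencone hpos hμr hu ((hKe x).1 hx)
  · change y ∈ nonnegCombinations _ at hy
    rw [nonnegCombinations_comp_equiv, ← B.equivFun.mem_nonnegCombinations_comp_iff] at hy
    obtain hy' | hy' := (eigencone 0).nonnegCombinations_subset (fun σ => (hu σ).1) hy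
    · exact absurd (B.equivFun.map_eq_zero_iff.1 hy') hy0
    · exact (hKe y).2 hy'
end

section
/- An algebraic integer λ is a weak Perron number if and only if λ^n is a Perron number for some positive integer n. -/
/-- `x` is a Perron number: a positive real algebraic integer strictly larger
in modulus than every other root of its minimal polynomial over ℚ. -/
def IsPerron (x : ℝ) : Prop :=
  0 < x ∧ IsIntegral ℤ x ∧
    ∀ z : ℂ, Polynomial.aeval z (minpoly ℚ x) = 0 → z ≠ (x : ℂ) → ‖z‖ < x

/-- `x` is a weak Perron number: a positive real algebraic integer at least as
large in modulus as every root of its minimal polynomial over ℚ. -/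
def IsWeakPerron (x : ℝ) : Prop :=
  0 < x ∧ IsIntegral ℤ x ∧
    ∀ z : ℂ, Polynomial.aeval z (minpoly ℚ x) = 0 → ‖z‖ ≤ x

/-!
Let `K ⊂ ℂ` be a finite normal extension of `ℚ` containing `λ`. If `σ ∈ Gal(K/ℚ)` satisfies
`|σλ| = λ`, then, with `c` complex conjugation, `(cσ)λ · σλ = |σλ|² = λ²`, and applying `τ`
gives `(τcσ)λ · (τσ)λ = (τλ)²`. When this identity holds for all `σ` in a submonoid `H ∋ c`,
every multiplicative `f` with values in a linearly ordered group with zero makes `f(·λ)` constant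
on the cosets `τH`: at a point where `f(·λ)` is maximal on `τH`, both factors on the left are at
most the right-hand side, which forces equality. For `f = |·|` the same squeeze at the maximum `λ`
shows that `{σ : |σλ| = λ}` is such a submonoid; for the `𝔭`-adic valuations and the complex
absolute values it shows that `σλ / λ` is an algebraic integer whose conjugates all have modulus
one, hence a root of unity by Kronecker. If `n` kills all these roots of unity, `λⁿ` is Perron.
Conversely, the conjugates of `λⁿ` are the `n`-th powers of the conjugates of `λ`.
-/

section GroupLemmas

variable {G M : Type*} [Group G] [LinearOrderedCommGroupWithZero M]

theorem eq_and_eq_of_mul_eq_sq {a b m : M} (ha : a ≤ m) (hb : b ≤ m) (ha0 : a ≠ 0)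
    (hab : a * b = m ^ 2) : a = m ∧ b = m :=
  (mul_eq_mul_iff_eq_and_eq_of_pos ha hb (zero_lt_iff.2 ha0)
    ((zero_lt_iff.2 ha0).trans_le ha)).1 (hab.trans (sq m))

theorem Submonoid.inv_mem_of_finite [Finite G] (H : Submonoid G) {g : G} (hg : g ∈ H) :
    g⁻¹ ∈ H := by
  obtain ⟨n, hn⟩ : g⁻¹ ∈ (Submonoid.powers g : Set G) := by
    rw [powers_eq_zpowers]; exact inv_mem (Subgroup.mem_zpowers g)
  exact hn ▸ pow_mem hg n

theorem apply_mul_eq_apply_one {h : G → M} (h0 : ∀ g, h g ≠ 0) (hmax : ∀ g, h g ≤ h 1) {c : G}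
    (hrel : ∀ τ σ, h σ = h 1 → h (τ * (c * σ)) * h (τ * σ) = h τ ^ 2)
    ⦃ρ σ : G⦄ (hρ : h ρ = h 1) (hσ : h σ = h 1) :
    h (ρ * (c * σ)) = h 1 ∧ h (ρ * σ) = h 1 :=
  eq_and_eq_of_mul_eq_sq (hmax _) (hmax _) (h0 _) (hρ ▸ hrel ρ σ hσ)

theorem apply_mul_eq_of_mem [Finite G] {h : G → M} (h0 : ∀ g, h g ≠ 0) {H : Submonoid G} {c : G}
    (hc : c ∈ H) (hrel : ∀ τ, ∀ σ ∈ H, h (τ * (c * σ)) * h (τ * σ) = h τ ^ 2)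
    (τ : G) {σ : G} (hσ : σ ∈ H) : h (τ * σ) = h τ := by
  obtain ⟨σ₁, hσ₁, hmax⟩ := Set.exists_max_image (H : Set G) (fun s ↦ h (τ * s))
    (Set.toFinite _) ⟨1, H.one_mem⟩
  have hconst : ∀ ρ ∈ H, h (τ * σ₁ * ρ) = h (τ * σ₁) := fun ρ hρ ↦ by
    have hle : ∀ s ∈ H, h (τ * σ₁ * s) ≤ h (τ * σ₁) := fun s hs ↦ by
      simpa only [mul_assoc] using hmax _ (H.mul_mem hσ₁ hs)
    exact (eq_and_eq_of_mul_eq_sq (hle _ (H.mul_mem hc hρ)) (hle ρ hρ) (h0 _)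
      (hrel _ ρ hρ)).2
  have hinv := H.inv_mem_of_finite hσ₁
  calc h (τ * σ) = h (τ * σ₁ * (σ₁⁻¹ * σ)) := by group
    _ = h (τ * σ₁) := hconst _ (H.mul_mem hinv hσ)
    _ = h (τ * σ₁ * σ₁⁻¹) := (hconst _ hinv).symm
    _ = h τ := by group

end GroupLemmas

open Polynomial NumberField IsDedekindDomain ComplexConjugate
open scoped NNReal

section GaloisOrbit

variable {k K : Type*} [Field k] [Field K] [Algebra k K]

theorem map_algEquiv_mul_eq_sq {M F : Type*} [Monoid M] [FunLike F K M] [MonoidHomClass F K M]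
    (f : F) {x : K} {c σ : K ≃ₐ[k] K} (hrel : (c * σ) x * σ x = x ^ 2) (τ : K ≃ₐ[k] K) :
    f ((τ * (c * σ)) x) * f ((τ * σ) x) = f (τ x) ^ 2 := by
  simp only [AlgEquiv.mul_apply] at hrel ⊢
  rw [← map_mul, ← map_mul, hrel, map_pow, map_pow]

theorem apply_algEquiv_eq_of_mem {M F : Type*} [LinearOrderedCommGroupWithZero M] [FunLike F K M]
    [MonoidWithZeroHomClass F K M] [Finite (K ≃ₐ[k] K)] (f : F) {x : K} (hx : x ≠ 0)
    {H : Submonoid (K ≃ₐ[k] K)} {c : K ≃ₐ[k] K} (hc : c ∈ H)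
    (hrel : ∀ σ ∈ H, (c * σ) x * σ x = x ^ 2) {σ : K ≃ₐ[k] K} (hσ : σ ∈ H) : f (σ x) = f x := by
  simpa using apply_mul_eq_of_mem (h := fun τ ↦ f (τ x))
    (fun τ ↦ (_root_.map_ne_zero f).2 ((_root_.map_ne_zero τ).2 hx)) hc
    (fun τ σ hσ ↦ map_algEquiv_mul_eq_sq f (hrel σ hσ) τ) 1 hσ

end GaloisOrbit

theorem NumberField.exists_pow_eq_one_of_valuation_eq_one_of_norm_eq_one {K : Type*} [Field K]
    [NumberField K] {w : K} (hv : ∀ v : HeightOneSpectrum (𝓞 K), v.valuation K w = 1)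
    (hφ : ∀ φ : K →+* ℂ, ‖φ w‖ = 1) : ∃ m > 0, w ^ m = 1 := by
  obtain ⟨r, rfl⟩ := HeightOneSpectrum.mem_integers_of_valuation_le_one K w fun v ↦ (hv v).le
  obtain ⟨m, hm, hr⟩ :=
    Embeddings.pow_eq_one_of_norm_eq_one K ℂ (RingOfIntegers.isIntegral_coe r) hφ
  exact ⟨m, hm, hr⟩

theorem exists_pow_algEquiv_apply_eq {K : Type*} [Field K] [NumberField K] {x : K} (hx : x ≠ 0)
    {H : Submonoid (K ≃ₐ[ℚ] K)} {c : K ≃ₐ[ℚ] K} (hc : c ∈ H)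
    (hrel : ∀ σ ∈ H, (c * σ) x * σ x = x ^ 2) {σ : K ≃ₐ[ℚ] K} (hσ : σ ∈ H) :
    ∃ m > 0, σ x ^ m = x ^ m := by
  obtain ⟨m, hm, hw⟩ := exists_pow_eq_one_of_valuation_eq_one_of_norm_eq_one (w := σ x / x)
    (fun v ↦ by
      rw [map_div₀, apply_algEquiv_eq_of_mem (v.valuation K) hx hc hrel hσ,
        div_self ((_root_.map_ne_zero _).2 hx)])
    (fun φ ↦ by
      have : ‖φ (σ x)‖₊ = ‖φ x‖₊ :=
        apply_algEquiv_eq_of_mem (nnnormHom.comp φ.toMonoidWithZeroHom) hx hc hrel hσ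
      rw [map_div₀, norm_div, ← coe_nnnorm, this, coe_nnnorm,
        div_self (norm_ne_zero_iff.2 ((_root_.map_ne_zero φ).2 hx))])
  exact ⟨m, hm, by rwa [div_pow, div_eq_one_iff_eq (pow_ne_zero m hx)] at hw⟩

theorem aeval_minpoly_eq_zero_iff_exists_algEquiv {F E L : Type*} [Field F] [Field E] [Field L]
    [Algebra F E] [Algebra F L] [Algebra E L] [IsScalarTower F E L] [Normal F E] [IsAlgClosed L]
    (y : E) (z : L) : aeval z (minpoly F y) = 0 ↔ ∃ τ : E ≃ₐ[F] E, algebraMap E L (τ y) = z := by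
  constructor
  · intro hz
    have hroot : z ∈ (minpoly F y).rootSet L :=
      mem_rootSet.2 ⟨minpoly.ne_zero (Algebra.IsIntegral.isIntegral y), hz⟩
    rw [← Algebra.IsAlgebraic.range_eval_eq_rootSet_minpoly] at hroot
    obtain ⟨ψ, rfl⟩ := hroot
    refine ⟨Normal.algHomEquivAut F L E ψ, ?_⟩
    conv_rhs => rw [← (Normal.algHomEquivAut F L E).symm_apply_apply ψ]
    rfl
  · rintro ⟨τ, rfl⟩
    rw [aeval_algebraMap_apply, ← minpoly.algEquiv_eq τ, minpoly.aeval, map_zero]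

theorem restrictNormal_conj_mul_apply_mul_apply {K : IntermediateField ℚ ℂ} [Normal ℚ K] {x : K}
    (hreal : conj (x : ℂ) = x) {σ : K ≃ₐ[ℚ] K} (hσ : ‖(σ x : ℂ)‖ = ‖(x : ℂ)‖) :
    ((Complex.conjAe.restrictScalars ℚ).restrictNormal K * σ) x * σ x = x ^ 2 := by
  apply Subtype.val_injective
  have hc : (((Complex.conjAe.restrictScalars ℚ).restrictNormal K (σ x) : K) : ℂ) =
      conj (σ x : ℂ) := AlgEquiv.restrictNormal_commutes _ K (σ x)
  simp only [AlgEquiv.mul_apply, IntermediateField.coe_mul, IntermediateField.coe_pow, hc]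
  rw [Complex.conj_mul', hσ, ← Complex.conj_mul', hreal, sq]

theorem exists_pow_algEquiv_apply_eq_of_norm_le {K : IntermediateField ℚ ℂ} [FiniteDimensional ℚ K]
    [Normal ℚ K] {x : K} (hx : x ≠ 0) (hreal : conj (x : ℂ) = x)
    (hmax : ∀ τ : K ≃ₐ[ℚ] K, ‖(τ x : ℂ)‖ ≤ ‖(x : ℂ)‖) :
    ∃ n > 0, ∀ τ : K ≃ₐ[ℚ] K, ‖(τ x : ℂ)‖ = ‖(x : ℂ)‖ → τ x ^ n = x ^ n := by
  set c := (Complex.conjAe.restrictScalars ℚ).restrictNormal K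
  set f : K →*₀ ℝ≥0 := nnnormHom.comp (K.val : K →+* ℂ).toMonoidWithZeroHom
  have hf : ∀ y : K, (f y : ℝ) = ‖(y : ℂ)‖ := fun y ↦ rfl
  have hS : ∀ σ : K ≃ₐ[ℚ] K, f (σ x) = f x ↔ ‖(σ x : ℂ)‖ = ‖(x : ℂ)‖ := fun σ ↦ by
    rw [← hf, ← hf, NNReal.coe_inj]
  have hrel : ∀ σ : K ≃ₐ[ℚ] K, f (σ x) = f x → (c * σ) x * σ x = x ^ 2 := fun σ hσ ↦
    restrictNormal_conj_mul_apply_mul_apply hreal ((hS σ).1 hσ)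
  have hclosed := apply_mul_eq_apply_one (h := fun τ ↦ f (τ x)) (c := c)
    (fun τ ↦ (map_ne_zero f).2 ((map_ne_zero τ).2 hx))
    (fun τ ↦ by rw [← NNReal.coe_le_coe, hf, hf]; exact hmax τ)
    (fun τ σ hσ ↦ map_algEquiv_mul_eq_sq f (hrel σ hσ) τ)
  let H : Submonoid (K ≃ₐ[ℚ] K) :=
    { carrier := {σ | f (σ x) = f x}
      one_mem' := rfl
      mul_mem' := fun hρ hσ ↦ (hclosed hρ hσ).2 }
  have hcH : c ∈ H := show f (c x) = f x by simpa using (hclosed (ρ := 1) (σ := 1) rfl rfl).1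
  have : NumberField K := ⟨⟩
  choose m hm hxm using fun σ : H ↦ exists_pow_algEquiv_apply_eq hx hcH hrel σ.2
  have : Fintype H := Fintype.ofFinite _
  refine ⟨∏ σ, m σ, Finset.prod_pos fun σ _ ↦ hm σ, fun τ hτ ↦ ?_⟩
  obtain ⟨k, hk⟩ := Finset.dvd_prod_of_mem m (Finset.mem_univ ⟨τ, (hS τ).2 hτ⟩)
  rw [hk, pow_mul, pow_mul, hxm ⟨τ, _⟩]

theorem exists_normal_intermediateField_mem {z : ℂ} (hz : IsIntegral ℚ z) :
    ∃ K : IntermediateField ℚ ℂ, FiniteDimensional ℚ K ∧ Normal ℚ K ∧ z ∈ K := by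
  let K := IntermediateField.adjoin ℚ ((minpoly ℚ z).rootSet ℂ)
  have : IsSplittingField ℚ K (minpoly ℚ z) :=
    IntermediateField.adjoin_rootSet_isSplittingField (IsAlgClosed.splits _)
  exact ⟨K, IsSplittingField.finiteDimensional K (minpoly ℚ z),
    Normal.of_isSplittingField (minpoly ℚ z), IntermediateField.subset_adjoin _ _
      (mem_rootSet.2 ⟨minpoly.ne_zero hz, minpoly.aeval ℚ z⟩)⟩

theorem minpoly_eq_of_coe_eq_ofReal {K : IntermediateField ℚ ℂ} {y : K} {r : ℝ} (hy : (y : ℂ) = r) :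
    minpoly ℚ y = minpoly ℚ r := by
  rw [← minpoly.algebraMap_eq (algebraMap ℝ ℂ).injective, Complex.coe_algebraMap, ← hy]
  exact IntermediateField.minpoly_eq y

/-- (Lind) An algebraic integer `λ > 0` is weak Perron iff some positive power
`λ^n` is Perron. -/
theorem weakPerron_iff_pow_perron (lam : ℝ) (h : IsIntegral ℤ lam)
    (hpos : 0 < lam) :
    IsWeakPerron lam ↔ ∃ n : ℕ, 0 < n ∧ IsPerron (lam ^ n) := by
  obtain ⟨K, _, _, hK⟩ := exists_normal_intermediateField_mem
    (h.map (IsScalarTower.toAlgHom ℤ ℝ ℂ)).tower_top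
  set x : K := ⟨lam, hK⟩
  have hx : ‖(x : ℂ)‖ = lam := by simp [x, abs_of_pos hpos]
  have hconj : ∀ (n : ℕ) (z : ℂ),
      aeval z (minpoly ℚ (lam ^ n)) = 0 ↔ ∃ τ : K ≃ₐ[ℚ] K, (τ x : ℂ) ^ n = z := fun n z ↦ by
    rw [← minpoly_eq_of_coe_eq_ofReal (y := x ^ n) (by simp [x]),
      aeval_minpoly_eq_zero_iff_exists_algEquiv]
    simp
  have hconj₁ : ∀ z : ℂ, aeval z (minpoly ℚ lam) = 0 ↔ ∃ τ : K ≃ₐ[ℚ] K, (τ x : ℂ) = z := by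
    simpa using hconj 1
  constructor
  · rintro ⟨-, -, hle⟩
    have hmax : ∀ τ : K ≃ₐ[ℚ] K, ‖(τ x : ℂ)‖ ≤ lam := fun τ ↦ hle _ ((hconj₁ _).2 ⟨τ, rfl⟩)
    obtain ⟨n, hn, hpow⟩ := exists_pow_algEquiv_apply_eq_of_norm_le (x := x)
      (fun h0 ↦ hpos.ne' (by simpa [x] using congrArg Subtype.val h0)) (by simp [x]) (hx ▸ hmax)
    refine ⟨n, hn, pow_pos hpos n, h.pow n, fun z hz hne ↦ ?_⟩
    obtain ⟨τ, rfl⟩ := (hconj n z).1 hz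
    have hlt : ‖(τ x : ℂ)‖ < lam := (hmax τ).lt_of_ne fun heq ↦ hne <| by
      rw [← IntermediateField.coe_pow, hpow τ (hx ▸ heq)]; simp [x]
    rw [norm_pow]
    exact pow_lt_pow_left₀ hlt (norm_nonneg _) hn.ne'
  · rintro ⟨n, hn, -, -, hlt⟩
    refine ⟨hpos, h, fun z hz ↦ ?_⟩
    obtain ⟨τ, rfl⟩ := (hconj₁ z).1 hz
    rw [← pow_le_pow_iff_left₀ (norm_nonneg _) hpos.le hn.ne', ← norm_pow]
    by_cases heq : (τ x : ℂ) ^ n = ((lam ^ n : ℝ) : ℂ)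
    · simp [heq, abs_of_pos hpos]
    · exact (hlt _ ((hconj n _).2 ⟨τ, rfl⟩) heq).le
end

section
/- For the map φ₃ on the 7-edge bipartite graph P₇ defined by a ↦ aGa, b ↦ bDb, c ↦ cFc, d ↦ aBa, e ↦ cBa, f ↦ aCa, g ↦ bEb, the induced endomorphism of the fundamental group π₁(P₇) ≅ F₆ is an automorphism (equivalently, φ₃ is a homotopy equivalence). -/
/-- `π₁(P₇, v₀)` is free of rank 6 on the loops `x_b = aB, x_c = aC, x_d = aD,
x_e = aE, x_f = aF, x_g = aG` (indexed `0,...,5`). The prototype map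
`φ₃ : a ↦ aGa, b ↦ bDb, c ↦ cFc, d ↦ aBa, e ↦ cBa, f ↦ aCa, g ↦ bEb` fixes
both vertices, and the endomorphism it induces on `π₁(P₇) ≅ F₆` is given on
generators by `x_y ↦ φ₃(a)·φ₃(y)⁻¹`, i.e.
`x_b ↦ x_g x_b x_d⁻¹ x_b`, `x_c ↦ x_g x_c x_f⁻¹ x_c`, `x_d ↦ x_g x_b⁻¹`,
`x_e ↦ x_g x_b⁻¹ x_c`, `x_f ↦ x_g x_c⁻¹`, `x_g ↦ x_g x_b x_e⁻¹ x_b`. -/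
def phi3Induced : FreeGroup (Fin 6) →* FreeGroup (Fin 6) :=
  FreeGroup.lift
    (fun i : Fin 6 =>
      let x : Fin 6 → FreeGroup (Fin 6) := FreeGroup.of
      ![x 5 * x 0 * (x 2)⁻¹ * x 0,
        x 5 * x 1 * (x 4)⁻¹ * x 1,
        x 5 * (x 0)⁻¹,
        x 5 * (x 0)⁻¹ * x 1,
        x 5 * (x 1)⁻¹,
        x 5 * x 0 * (x 3)⁻¹ * x 0] i)

/-- Solving `φ(x_d) = x_g x_b⁻¹`, `φ(x_e) = x_g x_b⁻¹ x_c`, `φ(x_f) = x_g x_c⁻¹` gives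
`x_c = φ(x_d)⁻¹ φ(x_e)`, `x_g = φ(x_f) x_c`, `x_b = φ(x_d)⁻¹ x_g`; the remaining generators
are then read off `φ(x_b)`, `φ(x_g)` and `φ(x_c)`. -/
def phi3InducedInv : FreeGroup (Fin 6) →* FreeGroup (Fin 6) :=
  FreeGroup.lift fun i : Fin 6 =>
    let x : Fin 6 → FreeGroup (Fin 6) := FreeGroup.of
    let c := (x 2)⁻¹ * x 3
    let g := x 4 * c
    let b := (x 2)⁻¹ * g
    ![b, c, b * (x 0)⁻¹ * g * b, b * (x 5)⁻¹ * g * b, c * (x 1)⁻¹ * g * c, g] i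

lemma phi3InducedInv_comp_phi3Induced :
    phi3InducedInv.comp phi3Induced = MonoidHom.id _ := by
  ext i
  fin_cases i <;> simp [phi3Induced, phi3InducedInv] <;> group

lemma phi3Induced_comp_phi3InducedInv :
    phi3Induced.comp phi3InducedInv = MonoidHom.id _ := by
  ext i
  fin_cases i <;> simp [phi3Induced, phi3InducedInv] <;> group

/-- The prototype map `φ₃` is a homotopy equivalence of `P₇`: the induced
endomorphism of `π₁(P₇) ≅ F₆` is an automorphism. -/
theorem phi3_induces_automorphism : Function.Bijective phi3Induced :=
  (MonoidHom.toMulEquiv phi3Induced phi3InducedInv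
    phi3InducedInv_comp_phi3Induced phi3Induced_comp_phi3InducedInv).bijective
end

section
/- If f: Γ → Γ is a uniformly λ-expanding bipartite graph map (no collapsed edges), then the split map S(f): S(Γ) → S(Γ) is also uniformly λ-expanding, where S(Γ) replaces each edge of Γ by a copy of P₇ with all seven edges of the same length as the replaced edge. -/
/-!
Each prototype word `φ_n(y)` has exactly `n` letters, so `S(f)(y_i)` pairs the letters of
`φ_{‖f(x_i)‖}(y)` one-to-one with those of `f(x_i)`. Its sequence of subscripts is therefore
that of `f(x_i)`, and since an edge of `S(Γ)` is as long as the edge of `Γ` it came from,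
`S(f)(y_i)` has the length `λ ℓ(x_i)` of `f(x_i)`.
-/

/-- The `m`-fold repetition `(xY)^m` of a 2-letter path. -/
def rep (m : ℕ) (x y : Fin 7) : List (Fin 7 × Bool) :=
  (List.replicate m [(x, true), (y, false)]).flatten

/-- The prototype map `φ_{3+2m}` on the edges `a,...,g = 0,...,6` of `P₇`. -/
def pmap (m : ℕ) : Fin 7 → List (Fin 7 × Bool) :=
  ![(0, true) :: (6, false) :: (rep m 0 1 ++ [(0, true)]),
    (1, true) :: (3, false) :: (rep m 1 2 ++ [(1, true)]),
    (2, true) :: (5, false) :: (rep m 2 0 ++ [(2, true)]),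
    (0, true) :: (1, false) :: (rep m 0 1 ++ [(0, true)]),
    (2, true) :: (1, false) :: (rep m 0 1 ++ [(0, true)]),
    (0, true) :: (2, false) :: (rep m 0 1 ++ [(0, true)]),
    (1, true) :: (4, false) :: (rep m 1 0 ++ [(1, true)])]

/-- The word of the prototype map `φ_n` (for odd `n`): `φ₁` is the identity,
and `φ_{3+2m} = pmap m`. -/
def protoWord (n : ℕ) (y : Fin 7) : List (Fin 7 × Bool) :=
  if n = 1 then [(y, true)] else pmap ((n - 3) / 2) y

/-- The split map `S(f)` on the edges `Fin 7 × ι` of the split graph `S(Γ)`: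
the edge `y_i` is sent to the edge path `φ_{‖f(x_i)‖}(y)` whose subscripts are
those of the edge path `f(x_i)`. -/
def splitMap {ι : Type*} (f : ι → List (ι × Bool)) :
    Fin 7 × ι → List ((Fin 7 × ι) × Bool) :=
  fun yi =>
    List.zipWith (fun p q => ((p.1, q.1), xor p.2 q.2))
      (protoWord (f yi.2).length yi.1) (f yi.2)

lemma rep_length (m : ℕ) (x y : Fin 7) : (rep m x y).length = 2 * m := by
  simp [rep, mul_comm]

lemma pmap_length (m : ℕ) (y : Fin 7) : (pmap m y).length = 2 * m + 3 := by
  fin_cases y <;> simp [pmap, rep_length]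

lemma protoWord_length {n : ℕ} (hn : Odd n) (y : Fin 7) : (protoWord n y).length = n := by
  obtain ⟨k, rfl⟩ := hn
  rcases k with _ | k
  · simp [protoWord]
  · rw [protoWord, if_neg (by omega), pmap_length]
    omega

lemma splitMap_map_subscript {ι : Type*} (f : ι → List (ι × Bool)) (y : Fin 7) (i : ι)
    (hodd : Odd (f i).length) :
    (splitMap f (y, i)).map (fun p => p.1.2) = (f i).map Prod.fst := by
  have hlen : (f i).length ≤ (protoWord (f i).length y).length :=
    (protoWord_length hodd y).ge
  rw [← List.map_snd_zip hlen, List.map_map, List.zip_eq_zipWith, List.map_zipWith, splitMap,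
    List.map_zipWith]
  rfl

theorem splitMap_uniformly_expanding_general (ι : Type*)
    (len : ι → ℝ) (lam : ℝ) (f : ι → List (ι × Bool))
    (hodd : ∀ i, Odd (f i).length)
    (hexp : ∀ i, ((f i).map (fun p => len p.1)).sum = lam * len i) :
    ∀ (y : Fin 7) (i : ι),
      ((splitMap f (y, i)).map (fun p => len p.1.2)).sum = lam * len i := by
  intro y i
  calc ((splitMap f (y, i)).map (fun p => len p.1.2)).sum
      = (((splitMap f (y, i)).map (fun p => p.1.2)).map len).sum := by rw [List.map_map]; rfl
    _ = (((f i).map Prod.fst).map len).sum := by rw [splitMap_map_subscript f y i (hodd i)]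
    _ = lam * len i := by rw [List.map_map]; exact hexp i

/-- If `f : Γ → Γ` is a uniformly λ-expanding bipartite graph map with no
collapsed edges, then the split map `S(f) : S(Γ) → S(Γ)` is also uniformly
λ-expanding, where each edge `y_i` of `S(Γ)` has the length `ℓ(x_i)` of the
edge of `Γ` it came from. -/
theorem splitMap_uniformly_expanding (ι : Type*) [Fintype ι]
    (len : ι → ℝ) (lam : ℝ) (f : ι → List (ι × Bool))
    (hne : ∀ i, 1 ≤ (f i).length) (hodd : ∀ i, Odd (f i).length)
    (hexp : ∀ i, ((f i).map (fun p => len p.1)).sum = lam * len i) :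
    ∀ (y : Fin 7) (i : ι),
      ((splitMap f (y, i)).map (fun p => len p.1.2)).sum = lam * len i :=
  splitMap_uniformly_expanding_general ι len lam f hodd hexp
end

section
/- Let A be a nonnegative square matrix indexed by pairs (k,i) with k ∈ {1,...,m}, i ∈ {1,...,M}, such that A sends the basis vector e_{(k,i)} to e_{(k,i+1)} for i < M, and A·e_{(k,M)} is a vector whose support includes e_{(j,1)} for all j ∈ {1,...,m} and e_{(k,2)}. Then A is mixing: A^{M²} is entrywise positive. More precisely, for each (k,i) and each r ≥ 1, the support of A^{rM}·e_{(k,i)} contains {e_{(j, i+t mod M)} : 1 ≤ j ≤ m, 0 ≤ t ≤ r-1}. -/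
open Fin.NatCast

/-!
With nonnegative entries, `(A ^ n) p q > 0` exactly when the edge `p` is reached from `q` by an
`n`-step path of the transition graph. From `(k, i)` there are `M`-step paths to `(j, i)` for every
`j` (climb to the tip of fan `k`, jump to the base of fan `j`, climb back to height `i`) and to
`(k, i + 1)` (use the extra edge from the tip to `(k, 1)` instead). Combining these, `r * M` steps
reach every `(j, i + t)` with `t < r`, and `r = M` reaches every edge.
-/

namespace Matrix

variable {n R : Type*} [Fintype n] [DecidableEq n] [Semiring R] [PartialOrder R]
  [IsStrictOrderedRing R] {A : Matrix n n R}

theorem pow_add_apply_pos (hA : ∀ i j, 0 ≤ A i j) {a b : ℕ} {i j k : n}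
    (hij : 0 < (A ^ a) i j) (hjk : 0 < (A ^ b) j k) : 0 < (A ^ (a + b)) i k := by
  rw [pow_add, mul_apply]
  exact Finset.sum_pos'
    (fun l _ ↦ mul_nonneg (pow_apply_nonneg hA a i l) (pow_apply_nonneg hA b l k))
    ⟨j, Finset.mem_univ j, mul_pos hij hjk⟩

end Matrix

namespace StarTransition

open Matrix

variable {m M : ℕ} [NeZero M] {R : Type*} [Semiring R] [PartialOrder R] [IsStrictOrderedRing R]

def IsFanShift (A : Matrix (Fin m × Fin M) (Fin m × Fin M) R) : Prop :=
  ∀ (k : Fin m) (i : Fin M), (i : ℕ) + 1 < M →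
    ∀ p, A p (k, i) = if p = (k, i + 1) then 1 else 0

variable {A : Matrix (Fin m × Fin M) (Fin m × Fin M) R}

theorem IsFanShift.pow_apply_pos (hA : ∀ p q, 0 ≤ A p q) (hshift : IsFanShift A) (k : Fin m)
    {a b : ℕ} (hab : a ≤ b) (hb : b < M) :
    0 < (A ^ (b - a)) (k, (b : Fin M)) (k, (a : Fin M)) := by
  induction b, hab using Nat.le_induction with
  | base => simp [one_apply]
  | succ b hab ih =>
    have hedge : 0 < (A ^ 1) (k, ((b + 1 : ℕ) : Fin M)) (k, (b : Fin M)) := by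
      have hval : ((b : Fin M) : ℕ) = b := Fin.val_cast_of_lt (by omega)
      rw [pow_one, hshift k _ (by omega)]
      simp
    rw [show b + 1 - a = 1 + (b - a) by omega]
    exact pow_add_apply_pos hA hedge (ih (by omega))

variable (hA : ∀ p q, 0 ≤ A p q) (hshift : IsFanShift A)
  (hexit : ∀ j k : Fin m, 0 < A (j, 0) (k, ((M - 1 : ℕ) : Fin M)))
  (hback : 1 < M → ∀ k : Fin m, 0 < A (k, 1) (k, ((M - 1 : ℕ) : Fin M)))

include hA hshift hexit in
theorem pow_apply_pos_same_position (j k : Fin m) (i : Fin M) : 0 < (A ^ M) (j, i) (k, i) := by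
  have hi := i.isLt
  have toTip : 0 < (A ^ (M - 1 - i)) (k, ((M - 1 : ℕ) : Fin M)) (k, i) := by
    simpa using hshift.pow_apply_pos hA k (a := i) (b := M - 1) (by omega) (by omega)
  have fromStart : 0 < (A ^ (i : ℕ)) (j, i) (j, 0) := by
    simpa using hshift.pow_apply_pos hA j (a := 0) (b := i) (by omega) hi
  have := pow_add_apply_pos hA fromStart (pow_add_apply_pos hA (pow_one A ▸ hexit j k) toTip)
  rwa [show (i : ℕ) + (1 + (M - 1 - i)) = M by omega] at this

include hA hshift hexit hback in
theorem pow_apply_pos_next_position (k : Fin m) (i : Fin M) : 0 < (A ^ M) (k, i + 1) (k, i) := by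
  have hi := i.isLt
  rcases Nat.lt_or_ge 1 M with hM | hM
  swap
  · obtain rfl : M = 1 := by omega
    rw [Subsingleton.elim (i + 1) i]
    exact pow_apply_pos_same_position hA hshift hexit k k i
  rcases Nat.lt_or_ge ((i : ℕ) + 1) M with hlt | hge
  · have toTip : 0 < (A ^ (M - 1 - i)) (k, ((M - 1 : ℕ) : Fin M)) (k, i) := by
      simpa using hshift.pow_apply_pos hA k (a := i) (b := M - 1) (by omega) (by omega)
    have fromOne : 0 < (A ^ (i : ℕ)) (k, i + 1) (k, 1) := by
      simpa using hshift.pow_apply_pos hA k (a := 1) (b := i + 1) (by omega) hlt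
    have := pow_add_apply_pos hA fromOne (pow_add_apply_pos hA (pow_one A ▸ hback hM k) toTip)
    rwa [show (i : ℕ) + (1 + (M - 1 - i)) = M by omega] at this
  · obtain rfl : i = ((M - 1 : ℕ) : Fin M) := by ext; simp; omega
    have oneToTip : 0 < (A ^ (M - 1 - 1)) (k, ((M - 1 : ℕ) : Fin M)) (k, 1) := by
      simpa using hshift.pow_apply_pos hA k (a := 1) (b := M - 1) (by omega) (by omega)
    have := pow_add_apply_pos hA (pow_one A ▸ hexit k k)
      (pow_add_apply_pos hA oneToTip (pow_one A ▸ hback hM k))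
    rw [← Nat.cast_add_one, Nat.sub_add_cancel (by omega), Fin.natCast_self]
    rwa [show 1 + (M - 1 - 1 + 1) = M by omega] at this

include hA hshift hexit hback in
theorem pow_succ_mul_apply_pos (r : ℕ) (k : Fin m) (i : Fin M) (j : Fin m) {t : ℕ}
    (ht : t ≤ r) :
    0 < (A ^ ((r + 1) * M)) (j, i + t) (k, i) := by
  induction r generalizing k i t with
  | zero =>
    obtain rfl : t = 0 := by omega
    simpa using pow_apply_pos_same_position hA hshift hexit j k i
  | succ r ih =>
    rw [add_mul, one_mul]
    cases t with
    | zero =>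
      exact pow_add_apply_pos hA (ih j i (Nat.zero_le r))
        (pow_apply_pos_same_position hA hshift hexit j k i)
    | succ t =>
      have := ih k (i + 1) (t := t) (by omega)
      rw [show i + 1 + (t : Fin M) = i + ((t + 1 : ℕ) : Fin M) by
        rw [Nat.cast_succ, add_assoc, add_comm 1]] at this
      exact pow_add_apply_pos hA this (pow_apply_pos_next_position hA hshift hexit hback k i)

end StarTransition

open StarTransition in
theorem star_transition_mixing_general (m M : ℕ) [NeZero M]
    (A : Matrix (Fin m × Fin M) (Fin m × Fin M) ℝ)
    (hA : ∀ p q, 0 ≤ A p q)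
    (hshift : ∀ (k : Fin m) (i : Fin M), (i : ℕ) + 1 < M →
      ∀ p, A p (k, i) = if p = (k, i + 1) then 1 else 0)
    (hlast : ∀ k : Fin m,
      (∀ j : Fin m, 0 < A (j, (0 : Fin M)) (k, ((M - 1 : ℕ) : Fin M))) ∧
      (1 < M → 0 < A (k, (1 : Fin M)) (k, ((M - 1 : ℕ) : Fin M)))) :
    (∀ p q, 0 < (A ^ (M * M)) p q) ∧
    (∀ (k : Fin m) (i : Fin M) (r : ℕ), 1 ≤ r →
      ∀ (j : Fin m) (t : ℕ), t ≤ r - 1 →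
        0 < (A ^ (r * M)) (j, i + (t : Fin M)) (k, i)) := by
  have hpos :=
    pow_succ_mul_apply_pos hA hshift (fun j k ↦ (hlast k).1 j) (fun hM k ↦ (hlast k).2 hM)
  refine ⟨?_, fun k i r hr j t ht ↦ ?_⟩
  · rintro ⟨j, s⟩ ⟨k, i⟩
    have hM := NeZero.pos M
    have := hpos (M - 1) k i j (t := ((s - i : Fin M) : ℕ)) (by omega)
    rwa [Nat.sub_add_cancel hM, Fin.cast_val_eq_self, add_sub_cancel] at this
  · obtain ⟨r, rfl⟩ := Nat.exists_eq_add_of_le' hr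
    exact hpos r k i j ht

/-- Mixing of the transition matrix of the star map `f_λ` on `*_{mM}`.  Edges
are indexed by pairs `(k, i) ∈ Fin m × Fin M` (0-indexed fans of `M` tips).
`A` shifts the basis vector `e_{(k,i)}` to `e_{(k,i+1)}` for `i + 1 < M`, and
the support of `A·e_{(k,M-1)}` (the last tip of each fan) contains `e_{(j,0)}`
for every `j` and also `e_{(k,1)}`.  Then `A^{M²}` is entrywise positive, and
more precisely for each `(k,i)` and `r ≥ 1` the support of `A^{rM}·e_{(k,i)}`
contains every `e_{(j, i + t mod M)}` with `j ∈ Fin m` and `0 ≤ t ≤ r-1`. -/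
theorem star_transition_mixing (m M : ℕ) [NeZero m] [NeZero M]
    (A : Matrix (Fin m × Fin M) (Fin m × Fin M) ℝ)
    (hA : ∀ p q, 0 ≤ A p q)
    (hshift : ∀ (k : Fin m) (i : Fin M), (i : ℕ) + 1 < M →
      ∀ p, A p (k, i) = if p = (k, i + 1) then 1 else 0)
    (hlast : ∀ k : Fin m,
      (∀ j : Fin m, 0 < A (j, (0 : Fin M)) (k, ((M - 1 : ℕ) : Fin M))) ∧
      (1 < M → 0 < A (k, (1 : Fin M)) (k, ((M - 1 : ℕ) : Fin M)))) :
    (∀ p q, 0 < (A ^ (M * M)) p q) ∧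
    (∀ (k : Fin m) (i : Fin M) (r : ℕ), 1 ≤ r →
      ∀ (j : Fin m) (t : ℕ), t ≤ r - 1 →
        0 < (A ^ (r * M)) (j, i + (t : Fin M)) (k, i)) :=
  star_transition_mixing_general m M A hA hshift hlast
end
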